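/- In Schlumprecht's space S, let v_j = (f(q_j)/q_j) ∑_{i=1}^{q_j} e_i with f(k) = log₂(k+1), and let (w_j)_{j=1}^n be a successive block basis of (e_i) where each w_j is a sum of d successive vectors each with the distribution of v_j. Then ∥∑_{j=1}^n w_j∥ ≥ (n/f(n)) · (d/2), provided d/2 ≤ ∥w_j∥ for each j, in particular ∥∑_{j=1}^n w_j∥ ≥ (1/2) · nd/f(n). -/
import Mathlib


/-- `N` satisfies the implicit equation of the norm of Schlumprecht's space `S`:
`‖x‖ = max(‖x‖_∞, sup_{k ≥ 2, E_1 < ... < E_k} (1/f(k)) ∑ ‖E_j x‖)` with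
`f(k) = log₂(k+1)`. -/
def sEq (N : (ℕ →₀ ℝ) → ℝ) : Prop :=
  ∀ x : ℕ →₀ ℝ, N x = max (⨆ i : ℕ, |x i|)
    (sSup {s : ℝ | ∃ k : ℕ, 2 ≤ k ∧ ∃ E : Fin k → Finset ℕ,
      (∀ i j : Fin k, i < j → ∀ a ∈ E i, ∀ b ∈ E j, a < b) ∧
      s = (1 / Real.logb 2 (k + 1)) * ∑ i, N (x.filter (· ∈ E i))})

private lemma sEq.nonneg {N : (ℕ →₀ ℝ) → ℝ} (hN : sEq N) (y : ℕ →₀ ℝ) : 0 ≤ N y := by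
  rw [hN y]
  exact le_trans (Real.iSup_nonneg fun i => abs_nonneg _) (le_max_left _ _)

private lemma filter_congr' (x : ℕ →₀ ℝ) (p q : ℕ → Prop) [DecidablePred p] [DecidablePred q]
    (h : ∀ a ∈ x.support, (p a ↔ q a)) : x.filter p = x.filter q := by
  ext a
  rw [Finsupp.filter_apply, Finsupp.filter_apply]
  by_cases ha : a ∈ x.support
  · simp only [eq_iff_iff.mpr (h a ha)]
  · have hx0 : x a = 0 := Finsupp.notMem_support_iff.mp ha
    simp [hx0]

private lemma filter_empty' (x : ℕ →₀ ℝ) :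
    x.filter (· ∈ (∅ : Finset ℕ)) = 0 := by
  ext a
  simp [Finsupp.filter_apply]

private lemma logb24 : Real.logb 2 4 = 2 := by
  rw [show (4 : ℝ) = 2 ^ (2 : ℕ) by norm_num, Real.logb_pow,
    Real.logb_self_eq_one (by norm_num)]
  norm_num

private lemma sEq.zero {N : (ℕ →₀ ℝ) → ℝ} (hN : sEq N) : N 0 = 0 := by
  rcases eq_or_lt_of_le (hN.nonneg 0) with h | h
  · exact h.symm
  exfalso
  have key := hN 0
  have hsup0 : (⨆ i : ℕ, |(0 : ℕ →₀ ℝ) i|) = 0 := by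
    simp [ciSup_const]
  set S := {s : ℝ | ∃ k : ℕ, 2 ≤ k ∧ ∃ E : Fin k → Finset ℕ,
      (∀ i j : Fin k, i < j → ∀ a ∈ E i, ∀ b ∈ E j, a < b) ∧
      s = (1 / Real.logb 2 (k + 1)) * ∑ i, N ((0 : ℕ →₀ ℝ).filter (· ∈ E i))} with hS
  have hmem : (3 / 2 : ℝ) * N 0 ∈ S := by
    refine ⟨3, by norm_num, fun _ => ∅, by simp, ?_⟩
    have : ∀ i : Fin 3, N ((0 : ℕ →₀ ℝ).filter (· ∈ (∅ : Finset ℕ))) = N 0 := by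
      intro i; rw [filter_empty' 0]
    rw [Finset.sum_congr rfl fun i _ => this i]
    rw [Finset.sum_const]
    have h4 : ((3 : ℕ) : ℝ) + 1 = 4 := by norm_num
    rw [h4, logb24]
    simp
    ring
  by_cases hbdd : BddAbove S
  · have h1 : (3 / 2 : ℝ) * N 0 ≤ sSup S := le_csSup hbdd hmem
    have h2 : sSup S ≤ N 0 := by
      rw [key, hsup0]; exact le_max_right _ _
    nlinarith
  · have h0 : sSup S = 0 := Real.sSup_of_not_bddAbove hbdd
    rw [key, hsup0, h0] at h
    simp at h

/-- in Schlumprecht's space `S`, if `(w_j)_{j=1}^n` is a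
successive block basis (each `w_j` a sum of `d` blocks distributed as `v_j`)
with `‖w_j‖ ≥ d/2` for each `j`, then
`‖∑_{j=1}^n w_j‖ ≥ (n / f(n)) · (d/2) = (1/2)·nd/f(n)`. -/
theorem stmt14 (N : (ℕ →₀ ℝ) → ℝ) (hN : sEq N) (n d : ℕ) (hn : 2 ≤ n)
    (w : Fin n → (ℕ →₀ ℝ))
    (hsucc : ∀ i j : Fin n, i < j → ∀ a ∈ (w i).support, ∀ b ∈ (w j).support, a < b)
    (hw : ∀ j, (d : ℝ) / 2 ≤ N (w j)) :
    ((n : ℝ) / Real.logb 2 (n + 1)) * ((d : ℝ) / 2) ≤ N (∑ j, w j) := by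
  set x : ℕ →₀ ℝ := ∑ j, w j with hx
  -- supports are pairwise disjoint
  have hdisj : ∀ i j : Fin n, i ≠ j → ∀ a, a ∈ (w i).support → a ∉ (w j).support := by
    intro i j hij a hai haj
    rcases lt_or_gt_of_ne hij with hlt | hgt
    · exact lt_irrefl a (hsucc i j hlt a hai a haj)
    · exact lt_irrefl a (hsucc j i hgt a haj a hai)
  -- filtering the sum by the support of w i recovers w i
  have hfilter : ∀ i : Fin n, x.filter (· ∈ (w i).support) = w i := by
    intro i
    rw [hx, Finsupp.filter_sum]
    rw [Finset.sum_eq_single i]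
    · ext a
      rw [Finsupp.filter_apply]
      by_cases ha : a ∈ (w i).support
      · simp [ha]
      · simp [ha, Finsupp.notMem_support_iff.mp ha]
    · intro j _ hji
      ext a
      rw [Finsupp.filter_apply]
      by_cases ha : a ∈ (w i).support
      · simp only [ha, if_true]
        exact Finsupp.notMem_support_iff.mp (hdisj i j (Ne.symm hji) a ha)
      · simp [ha]
    · intro hi; exact absurd (Finset.mem_univ i) hi
  set S := {s : ℝ | ∃ k : ℕ, 2 ≤ k ∧ ∃ E : Fin k → Finset ℕ,
      (∀ i j : Fin k, i < j → ∀ a ∈ E i, ∀ b ∈ E j, a < b) ∧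
      s = (1 / Real.logb 2 (k + 1)) * ∑ i, N (x.filter (· ∈ E i))} with hS
  have hfn : (0 : ℝ) < Real.logb 2 (n + 1) := by
    apply Real.logb_pos (by norm_num)
    have : (1 : ℝ) ≤ (n : ℝ) := by exact_mod_cast Nat.one_le_of_lt hn
    linarith
  -- membership
  have hmem : (1 / Real.logb 2 (n + 1)) * ∑ i, N (w i) ∈ S := by
    refine ⟨n, hn, fun i => (w i).support, hsucc, ?_⟩
    simp only [hfilter]
  -- bounded above
  have hbdd : BddAbove S := by
    refine ⟨∑ A ∈ x.support.powerset, N (x.filter (· ∈ A)), ?_⟩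
    rintro s ⟨k, hk, E, hE, rfl⟩
    set C := ∑ A ∈ x.support.powerset, N (x.filter (· ∈ A)) with hC
    have hCnonneg : 0 ≤ C := Finset.sum_nonneg fun A _ => hN.nonneg _
    set A : Fin k → Finset ℕ := fun i => E i ∩ x.support with hA
    have hfc : ∀ i, x.filter (· ∈ E i) = x.filter (· ∈ A i) := by
      intro i
      apply filter_congr'
      intro a ha
      simp [hA, Finset.mem_inter, ha]
    -- the sum over nonempty pieces
    set T := Finset.univ.filter (fun i : Fin k => (A i).Nonempty) with hT
    have hsum1 : ∑ i, N (x.filter (· ∈ A i)) = ∑ i ∈ T, N (x.filter (· ∈ A i)) := by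
      refine (Finset.sum_subset (Finset.filter_subset _ _) ?_).symm
      intro i _ hiT
      have hAe : A i = ∅ := by
        by_contra hne
        exact hiT (Finset.mem_filter.mpr ⟨Finset.mem_univ i, Finset.nonempty_iff_ne_empty.mpr hne⟩)
      rw [hAe, filter_empty', hN.zero]
    have hinj : ∀ i ∈ T, ∀ j ∈ T, A i = A j → i = j := by
      intro i hi j hj hij
      by_contra hne
      rcases Finset.mem_filter.mp hi with ⟨_, ⟨a, haA⟩⟩
      have haAj : a ∈ A j := hij ▸ haA
      have haEi : a ∈ E i := (Finset.mem_inter.mp haA).1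
      have haEj : a ∈ E j := (Finset.mem_inter.mp haAj).1
      rcases lt_or_gt_of_ne hne with hlt | hgt
      · exact lt_irrefl a (hE i j hlt a haEi a haEj)
      · exact lt_irrefl a (hE j i hgt a haEj a haEi)
    have hsum2 : ∑ i ∈ T, N (x.filter (· ∈ A i)) =
        ∑ B ∈ T.image A, N (x.filter (· ∈ B)) := by
      rw [Finset.sum_image hinj]
    have himg : T.image A ⊆ x.support.powerset := by
      intro B hB
      rcases Finset.mem_image.mp hB with ⟨i, _, rfl⟩
      exact Finset.mem_powerset.mpr (Finset.inter_subset_right)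
    have hsum3 : ∑ B ∈ T.image A, N (x.filter (· ∈ B)) ≤ C :=
      Finset.sum_le_sum_of_subset_of_nonneg himg fun B _ _ => hN.nonneg _
    have hSig : ∑ i, N (x.filter (· ∈ E i)) ≤ C := by
      calc ∑ i, N (x.filter (· ∈ E i)) = ∑ i, N (x.filter (· ∈ A i)) := by
            exact Finset.sum_congr rfl fun i _ => by rw [hfc i]
        _ ≤ C := by rw [hsum1, hsum2]; exact hsum3
    have hSig0 : 0 ≤ ∑ i, N (x.filter (· ∈ E i)) :=
      Finset.sum_nonneg fun i _ => hN.nonneg _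
    have hfk1 : (1 : ℝ) ≤ Real.logb 2 (k + 1) := by
      have h2 : Real.logb 2 2 = 1 := Real.logb_self_eq_one (by norm_num)
      have hkk : (2 : ℝ) ≤ (k : ℝ) := by exact_mod_cast hk
      have hmono : Real.logb 2 2 ≤ Real.logb 2 (k + 1) :=
        Real.logb_le_logb_of_le (by norm_num) (by norm_num) (by linarith)
      linarith
    have h1f : 1 / Real.logb 2 (k + 1) ≤ 1 := by
      rw [div_le_one (by linarith)]; exact hfk1
    have h1f0 : 0 ≤ 1 / Real.logb 2 (k + 1) := by positivity
    calc (1 / Real.logb 2 (k + 1)) * ∑ i, N (x.filter (· ∈ E i))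
        ≤ 1 * C := mul_le_mul h1f hSig hSig0 zero_le_one
      _ = C := one_mul C
  -- conclude
  have hle : (1 / Real.logb 2 (n + 1)) * ∑ i, N (w i) ≤ N x := by
    have h1 : (1 / Real.logb 2 (n + 1)) * ∑ i, N (w i) ≤ sSup S := le_csSup hbdd hmem
    have h2 : sSup S ≤ N x := by
      rw [hN x]; exact le_max_right _ _
    exact h1.trans h2
  refine le_trans ?_ hle
  have hsum : ((n : ℝ)) * ((d : ℝ) / 2) ≤ ∑ i, N (w i) := by
    calc ((n : ℝ)) * ((d : ℝ) / 2) = ∑ _i : Fin n, ((d : ℝ) / 2) := by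
          rw [Finset.sum_const, Finset.card_univ, Fintype.card_fin, nsmul_eq_mul]
      _ ≤ ∑ i, N (w i) := Finset.sum_le_sum fun i _ => hw i
  have := mul_le_mul_of_nonneg_left hsum (le_of_lt (by positivity :
    (0 : ℝ) < 1 / Real.logb 2 (n + 1)))
  calc ((n : ℝ) / Real.logb 2 (n + 1)) * ((d : ℝ) / 2)
      = (1 / Real.logb 2 (n + 1)) * ((n : ℝ) * ((d : ℝ) / 2)) := by ring
    _ ≤ (1 / Real.logb 2 (n + 1)) * ∑ i, N (w i) := this
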